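/- Let s : (0, R) → ℝ be a nonnegative differentiable function, let k ≥ 0 be an integer, λ ≥ 1, C₀ ≥ 0, and A ≥ 0 constants, and suppose that for all r ∈ (0, R): (k+1)(1/r − A)·s(r) ≤ s'(r) + C₀ r^{k+1} λ^{k/2+1}. Suppose moreover λ^{-1/2} < R and s(λ^{-1/2}) ≤ C₁ λ^{-k/2}. Then there is a constant C (depending only on C₀, C₁, A, k, R) such that s(r) ≤ C r^{k+1} λ^{(k+1)/2} for all r ∈ (0, λ^{-1/2}]. -/

import Mathlib

/-!
Multiplying the inequality by the integrating factor `e^{-Φ(x)} = e^{(k+1)A x} / x^{k+1}`, where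
`Φ' = (k+1)(1/x - A)`, turns it into `(s e^{-Φ})' ≥ -B e^{(k+1)A x} ≥ -B e^{(k+1)A R}` with
`B = C₀ λ^{k/2+1}`. Hence `s e^{-Φ} + B e^{(k+1)A R} x` is monotone, and comparing its values at
`r` and at `ρ = λ^{-1/2}` gives `s r / r^{k+1} ≤ e^{(k+1)A R} (s ρ / ρ^{k+1} + B ρ)`, where both
terms on the right are `O(λ^{(k+1)/2})`.
-/

open Set Real

noncomputable def integratingFactor (k : ℕ) (A x : ℝ) : ℝ :=
  exp ((k + 1) * A * x) / x ^ (k + 1)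

section IntegratingFactor

variable {k : ℕ} {A : ℝ}

theorem integratingFactor_mul_pow {x : ℝ} (hx : x ≠ 0) :
    integratingFactor k A x * x ^ (k + 1) = exp ((k + 1) * A * x) :=
  div_mul_cancel₀ _ (pow_ne_zero _ hx)

theorem hasDerivAt_integratingFactor {x : ℝ} (hx : x ≠ 0) :
    HasDerivAt (integratingFactor k A)
      (-((k + 1) * (1 / x - A)) * integratingFactor k A x) x := by
  have hexp : HasDerivAt (fun y => exp ((k + 1) * A * y))
      (exp ((k + 1) * A * x) * ((k + 1) * A)) x := by
    simpa using ((hasDerivAt_id x).const_mul ((k + 1) * A)).exp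
  refine (hexp.div (hasDerivAt_pow (k + 1) x) (pow_ne_zero _ hx)).congr_deriv ?_
  unfold integratingFactor
  field_simp
  push_cast
  ring

theorem exp_mul_le_exp_mul (hA : 0 ≤ A) {x R : ℝ} (hxR : x ≤ R) :
    exp ((k + 1) * A * x) ≤ exp ((k + 1) * A * R) :=
  exp_le_exp.2 (mul_le_mul_of_nonneg_left hxR (by positivity))

variable {B R : ℝ} {s s' : ℝ → ℝ}

theorem monotoneOn_mul_integratingFactor_add (hA : 0 ≤ A) (hB : 0 ≤ B)
    (hs : ∀ x ∈ Ioo 0 R, HasDerivAt s (s' x) x)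
    (hineq : ∀ x ∈ Ioo 0 R, (k + 1) * (1 / x - A) * s x ≤ s' x + B * x ^ (k + 1)) :
    MonotoneOn (fun x => s x * integratingFactor k A x + B * exp ((k + 1) * A * R) * x)
      (Ioo 0 R) := by
  have hderiv : ∀ x ∈ Ioo 0 R,
      HasDerivAt (fun x => s x * integratingFactor k A x + B * exp ((k + 1) * A * R) * x)
        (integratingFactor k A x * (s' x - (k + 1) * (1 / x - A) * s x)
          + B * exp ((k + 1) * A * R)) x := fun x hx =>
    (((hs x hx).mul (hasDerivAt_integratingFactor hx.1.ne')).add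
      ((hasDerivAt_id x).const_mul _)).congr_deriv (by ring)
  refine monotoneOn_of_hasDerivWithinAt_nonneg (convex_Ioo 0 R)
    (fun x hx => (hderiv x hx).continuousAt.continuousWithinAt)
    (by rw [interior_Ioo]; exact fun x hx => (hderiv x hx).hasDerivWithinAt) ?_
  rw [interior_Ioo]
  intro x hx
  have hF : 0 ≤ integratingFactor k A x := div_nonneg (exp_pos _).le (pow_pos hx.1 _).le
  calc (0 : ℝ) ≤ B * (exp ((k + 1) * A * R) - exp ((k + 1) * A * x)) :=
        mul_nonneg hB (sub_nonneg.2 (exp_mul_le_exp_mul hA hx.2.le))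
    _ = integratingFactor k A x * -(B * x ^ (k + 1)) + B * exp ((k + 1) * A * R) := by
        rw [← integratingFactor_mul_pow hx.1.ne']; ring
    _ ≤ _ := by gcongr; linarith [hineq x hx]

theorem le_mul_pow_of_integratingFactor (hA : 0 ≤ A) (hB : 0 ≤ B)
    (hs0 : ∀ x ∈ Ioo 0 R, 0 ≤ s x) (hs : ∀ x ∈ Ioo 0 R, HasDerivAt s (s' x) x)
    (hineq : ∀ x ∈ Ioo 0 R, (k + 1) * (1 / x - A) * s x ≤ s' x + B * x ^ (k + 1))
    {r ρ : ℝ} (hr : 0 < r) (hrρ : r ≤ ρ) (hρR : ρ < R) :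
    s r ≤ exp ((k + 1) * A * R) * (s ρ / ρ ^ (k + 1) + B * ρ) * r ^ (k + 1) := by
  have hρ : 0 < ρ := hr.trans_le hrρ
  have hmono : s r * integratingFactor k A r + B * exp ((k + 1) * A * R) * r
      ≤ s ρ * integratingFactor k A ρ + B * exp ((k + 1) * A * R) * ρ :=
    monotoneOn_mul_integratingFactor_add hA hB hs hineq ⟨hr, hrρ.trans_lt hρR⟩ ⟨hρ, hρR⟩ hrρ
  have hlower : s r / r ^ (k + 1) ≤ s r * integratingFactor k A r := by
    rw [integratingFactor, mul_div_assoc']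
    gcongr
    exact le_mul_of_one_le_right (hs0 r ⟨hr, hrρ.trans_lt hρR⟩) (one_le_exp (by positivity))
  have hupper : s ρ * integratingFactor k A ρ ≤ exp ((k + 1) * A * R) * (s ρ / ρ ^ (k + 1)) := by
    rw [integratingFactor, mul_div_assoc', mul_comm (s ρ), mul_div_assoc]
    gcongr
    exact div_nonneg (hs0 ρ ⟨hρ, hρR⟩) (pow_pos hρ _).le
  have hBr : 0 ≤ B * exp ((k + 1) * A * R) * r := by positivity
  rw [← div_le_iff₀ (pow_pos hr _)]
  linear_combination hlower + hmono + hupper + hBr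

end IntegratingFactor

theorem rpow_neg_half_pow {lam : ℝ} (hlam : 0 ≤ lam) (n : ℕ) :
    (lam ^ (-(1 : ℝ) / 2)) ^ n = lam ^ (-(n : ℝ) / 2) := by
  rw [← rpow_natCast, ← rpow_mul hlam]
  ring_nf

theorem stmt3_general (k : ℕ) (C₀ C₁ A R : ℝ)
    (hC₀ : 0 ≤ C₀) (hC₁ : 0 ≤ C₁) (hA : 0 ≤ A) :
    ∃ C : ℝ, ∀ (s s' : ℝ → ℝ) (lam : ℝ), 1 ≤ lam →
      (∀ r ∈ Ioo (0 : ℝ) R, 0 ≤ s r) →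
      (∀ r ∈ Ioo (0 : ℝ) R, HasDerivAt s (s' r) r) →
      (∀ r ∈ Ioo (0 : ℝ) R,
        ((k : ℝ) + 1) * (1 / r - A) * s r ≤ s' r + C₀ * r ^ (k + 1) * lam ^ ((k : ℝ) / 2 + 1)) →
      lam ^ (-(1 : ℝ) / 2) < R →
      s (lam ^ (-(1 : ℝ) / 2)) ≤ C₁ * lam ^ (-(k : ℝ) / 2) →
      ∀ r ∈ Ioc (0 : ℝ) (lam ^ (-(1 : ℝ) / 2)),
        s r ≤ C * r ^ (k + 1) * lam ^ (((k : ℝ) + 1) / 2) := by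
  refine ⟨(C₁ + C₀) * exp ((k + 1) * A * R), ?_⟩
  intro s s' lam hlam hs0 hs hineq hρR hsρ r ⟨hr, hrρ⟩
  have hlam0 : 0 < lam := by linarith
  have key := le_mul_pow_of_integratingFactor (B := C₀ * lam ^ ((k : ℝ) / 2 + 1))
    hA (by positivity) hs0 hs (fun x hx => (hineq x hx).trans_eq (by ring)) hr hrρ hρR
  have hboundary : s (lam ^ (-(1 : ℝ) / 2)) / (lam ^ (-(1 : ℝ) / 2)) ^ (k + 1)
      ≤ C₁ * lam ^ (((k : ℝ) + 1) / 2) := by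
    rw [rpow_neg_half_pow hlam0.le, div_eq_mul_inv, ← rpow_neg hlam0.le]
    calc _ ≤ C₁ * lam ^ (-(k : ℝ) / 2) * lam ^ (-(-((k + 1 : ℕ) : ℝ) / 2)) := by gcongr
      _ = C₁ * lam ^ ((1 : ℝ) / 2) := by rw [mul_assoc, ← rpow_add hlam0]; push_cast; ring_nf
      _ ≤ C₁ * lam ^ (((k : ℝ) + 1) / 2) := by gcongr; linarith [k.cast_nonneg (α := ℝ)]
  have hBρ : lam ^ ((k : ℝ) / 2 + 1) * lam ^ (-(1 : ℝ) / 2) = lam ^ (((k : ℝ) + 1) / 2) := by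
    rw [← rpow_add hlam0]; ring_nf
  calc s r ≤ _ := key
    _ ≤ exp ((k + 1) * A * R) * (C₁ * lam ^ (((k : ℝ) + 1) / 2)
          + C₀ * lam ^ (((k : ℝ) + 1) / 2)) * r ^ (k + 1) := by
        rw [mul_assoc C₀, hBρ]; gcongr
    _ = _ := by ring

/-- Integrating-factor step: if `s ≥ 0` on `(0,R)` satisfies the differential inequality
`(k+1)(1/r − A) s(r) ≤ s'(r) + C₀ r^{k+1} λ^{k/2+1}` on `(0,R)`, `λ ≥ 1`,
`λ^{-1/2} < R`, and `s(λ^{-1/2}) ≤ C₁ λ^{-k/2}`, then there is a constant `C`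
(depending only on `C₀, C₁, A, k, R`) with `s(r) ≤ C r^{k+1} λ^{(k+1)/2}` for all
`r ∈ (0, λ^{-1/2}]`. -/
theorem stmt3 (k : ℕ) (C₀ C₁ A R : ℝ)
    (hC₀ : 0 ≤ C₀) (hC₁ : 0 ≤ C₁) (hA : 0 ≤ A) (hR : 0 < R) :
    ∃ C : ℝ, ∀ (s s' : ℝ → ℝ) (lam : ℝ), 1 ≤ lam →
      (∀ r ∈ Ioo (0 : ℝ) R, 0 ≤ s r) →
      (∀ r ∈ Ioo (0 : ℝ) R, HasDerivAt s (s' r) r) →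
      (∀ r ∈ Ioo (0 : ℝ) R,
        ((k : ℝ) + 1) * (1 / r - A) * s r ≤ s' r + C₀ * r ^ (k + 1) * lam ^ ((k : ℝ) / 2 + 1)) →
      lam ^ (-(1 : ℝ) / 2) < R →
      s (lam ^ (-(1 : ℝ) / 2)) ≤ C₁ * lam ^ (-(k : ℝ) / 2) →
      ∀ r ∈ Ioc (0 : ℝ) (lam ^ (-(1 : ℝ) / 2)),
        s r ≤ C * r ^ (k + 1) * lam ^ (((k : ℝ) + 1) / 2) :=
  stmt3_general k C₀ C₁ A R hC₀ hC₁ hA
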